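/- In the Laver table of order 2^n, for every p, q in {1,...,2^n} there exists a unique s in {1,...,2^n} such that p ⋆ₙ (q ⋆ₙ r) = s ⋆ₙ r for all r; this s, denoted p ∘ₙ q, satisfies (p ∘ₙ q) + 1 ≡ p ⋆ₙ (q + 1) mod 2^n, and ∘ₙ is associative. -/

import Mathlib

/-!
Write `N` for the size of the table. Row `N` is the identity, column `N` is constantly `N`,
and `p < p ⋆ q` whenever `p < N`. With these, descending induction on `p` and on `q` and
ascending induction on `r` upgrade the defining identity `p ⋆ (q ⋆ 1) = (p ⋆ q) ⋆ (p ⋆ 1)`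
to full left distributivity. Now if `s ⋆ 1 = p ⋆ (q ⋆ 1)`, induction on `r` and left
distributivity give `p ⋆ (q ⋆ r) = s ⋆ r` for all `r`. Since `s ↦ s ⋆ 1 = s % N + 1` is a
bijection of `{1, …, N}`, exactly one such `s` exists, and uniqueness yields associativity.
-/

def LaverAxioms (N : ℕ) (star : ℕ → ℕ → ℕ) : Prop :=
  (∀ p q, p ∈ Set.Icc 1 N → q ∈ Set.Icc 1 N → star p q ∈ Set.Icc 1 N) ∧
  (∀ p ∈ Set.Icc 1 N, star p 1 = p % N + 1) ∧
  (∀ p q, p ∈ Set.Icc 1 N → q ∈ Set.Icc 1 N →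
    star p (star q 1) = star (star p q) (star p 1))

open Set

theorem Nat.Icc_induction {N : ℕ} {P : ℕ → Prop} (one : 1 ≤ N → P 1)
    (succ : ∀ r, 1 ≤ r → r < N → P r → P (r + 1)) : ∀ r ∈ Icc 1 N, P r := by
  rintro r ⟨hr1, hrN⟩
  induction r, hr1 using Nat.le_induction with
  | base => exact one hrN
  | succ r hr ih => exact succ r hr (by omega) (ih (by omega))

theorem Nat.Icc_decreasing_induction {N : ℕ} {P : ℕ → Prop}
    (step : ∀ p ∈ Icc 1 N, (∀ p' ∈ Icc 1 N, p < p' → P p') → P p) :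
    ∀ p ∈ Icc 1 N, P p := by
  refine Nat.strong_decreasing_induction (P := fun p => p ∈ Icc 1 N → P p) ⟨N, ?_⟩ ?_
  · exact fun m hm hmN => absurd hmN.2 (by omega)
  · exact fun p ih hp => step p hp fun p' hp' hlt => ih p' hlt hp'

theorem Nat.eq_of_mod_eq_of_mem_Icc {N s t : ℕ} (hs : s ∈ Icc 1 N) (ht : t ∈ Icc 1 N)
    (hst : s % N = t % N) : s = t := by
  obtain ⟨hs1, hsN⟩ := hs
  obtain ⟨ht1, htN⟩ := ht
  rcases hsN.lt_or_eq with hs | rfl <;> rcases htN.lt_or_eq with ht | rfl <;>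
    simp only [Nat.mod_eq_of_lt, Nat.mod_self, *] at hst <;> omega

def cyclicPred (N x : ℕ) : ℕ := if x = 1 then N else x - 1

theorem cyclicPred_mem {N x : ℕ} (hx : x ∈ Icc 1 N) : cyclicPred N x ∈ Icc 1 N := by
  obtain ⟨hx1, hxN⟩ := hx
  unfold cyclicPred
  split_ifs <;> constructor <;> omega

theorem cyclicPred_mod_add_one {N x : ℕ} (hx : x ∈ Icc 1 N) :
    cyclicPred N x % N + 1 = x := by
  obtain ⟨hx1, hxN⟩ := hx
  unfold cyclicPred
  split_ifs with h
  · rw [Nat.mod_self, h]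
  · rw [Nat.mod_eq_of_lt (by omega)]; omega

def laverComp (N : ℕ) (star : ℕ → ℕ → ℕ) (p q : ℕ) : ℕ :=
  cyclicPred N (star p (star q 1))

namespace LaverAxioms

variable {N : ℕ} {star : ℕ → ℕ → ℕ} {p q s : ℕ}

theorem star_mem (h : LaverAxioms N star) (hp : p ∈ Icc 1 N) (hq : q ∈ Icc 1 N) :
    star p q ∈ Icc 1 N :=
  h.1 p q hp hq

theorem star_one (h : LaverAxioms N star) (hp : p ∈ Icc 1 N) : star p 1 = p % N + 1 :=
  h.2.1 p hp

theorem star_one_of_lt (h : LaverAxioms N star) (hp : 1 ≤ p) (hpN : p < N) :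
    star p 1 = p + 1 := by
  rw [h.star_one ⟨hp, hpN.le⟩, Nat.mod_eq_of_lt hpN]

theorem top_star_one (h : LaverAxioms N star) (hN : 1 ≤ N) : star N 1 = 1 := by
  rw [h.star_one ⟨hN, le_rfl⟩, Nat.mod_self]

theorem star_star_one (h : LaverAxioms N star) (hp : p ∈ Icc 1 N) (hq : q ∈ Icc 1 N) :
    star p (star q 1) = star (star p q) (star p 1) :=
  h.2.2 p q hp hq

theorem star_succ (h : LaverAxioms N star) (hp : p ∈ Icc 1 N) (hq : 1 ≤ q) (hqN : q < N) :
    star p (q + 1) = star (star p q) (star p 1) := by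
  rw [← h.star_one_of_lt hq hqN, h.star_star_one hp ⟨hq, hqN.le⟩]

theorem top_star (h : LaverAxioms N star) : ∀ q ∈ Icc 1 N, star N q = q := by
  refine Nat.Icc_induction (fun hN => h.top_star_one hN) fun q hq hqN ih => ?_
  rw [h.star_succ ⟨by omega, le_rfl⟩ hq hqN, ih, h.top_star_one (by omega),
    h.star_one_of_lt hq hqN]

theorem lt_star (h : LaverAxioms N star) :
    ∀ p ∈ Icc 1 N, p < N → ∀ q ∈ Icc 1 N, p < star p q := by
  refine Nat.Icc_decreasing_induction fun p hp ihp hpN =>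
    Nat.Icc_induction (fun _ => ?_) fun q hq hqN ihq => ?_
  · rw [h.star_one_of_lt hp.1 hpN]; omega
  · have hpq := h.star_mem hp ⟨hq, hqN.le⟩
    rw [h.star_succ hp hq hqN, h.star_one_of_lt hp.1 hpN]
    rcases hpq.2.lt_or_eq with hlt | htop
    · exact ihq.trans (ihp _ hpq ihq hlt _ ⟨by omega, hpN⟩)
    · rw [htop, h.top_star _ ⟨by omega, hpN⟩]; omega

theorem star_top (h : LaverAxioms N star) (hp : p ∈ Icc 1 N) : star p N = N := by
  have hN : 1 ≤ N := hp.1.trans hp.2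
  rcases hp.2.lt_or_eq with hpN | rfl
  · have hpN' := h.star_mem hp ⟨hN, le_rfl⟩
    have key := h.star_star_one hp ⟨hN, le_rfl⟩
    rw [h.top_star_one hN, h.star_one_of_lt hp.1 hpN] at key
    by_contra hne
    have h₁ := h.lt_star p hp hpN N ⟨hN, le_rfl⟩
    have h₂ := h.lt_star _ hpN' (lt_of_le_of_ne hpN'.2 hne) (p + 1) ⟨by omega, hpN⟩
    omega
  · exact h.top_star _ hp

theorem left_distrib_step (h : LaverAxioms N star) (hp : p ∈ Icc 1 N) (hpN : p < N)
    (hq : q ∈ Icc 1 N) (hqN : q < N)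
    (ihp : ∀ p' ∈ Icc 1 N, p < p' → ∀ q' ∈ Icc 1 N, ∀ r ∈ Icc 1 N,
      star p' (star q' r) = star (star p' q') (star p' r))
    (ihq : ∀ q' ∈ Icc 1 N, q < q' → ∀ r ∈ Icc 1 N,
      star p (star q' r) = star (star p q') (star p r)) :
    ∀ r ∈ Icc 1 N, star p (star q r) = star (star p q) (star p r) := by
  have hN : 1 ≤ N := hp.1.trans hp.2
  refine Nat.Icc_induction (fun _ => h.star_star_one hp hq) fun r hr hrN ih => ?_
  have hr' : r ∈ Icc 1 N := ⟨hr, hrN.le⟩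
  calc star p (star q (r + 1))
      = star p (star (star q r) (star q 1)) := by rw [h.star_succ hq hr hrN]
    _ = star (star p (star q r)) (star p (star q 1)) :=
        ihq _ (h.star_mem hq hr') (h.lt_star q hq hqN r hr') _ (h.star_mem hq ⟨le_rfl, hN⟩)
    _ = star (star (star p q) (star p r)) (star (star p q) (star p 1)) := by
        rw [ih, h.star_star_one hp hq]
    _ = star (star p q) (star (star p r) (star p 1)) :=
        (ihp _ (h.star_mem hp hq) (h.lt_star p hp hpN q hq) _ (h.star_mem hp hr') _
          (h.star_mem hp ⟨le_rfl, hN⟩)).symm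
    _ = star (star p q) (star p (r + 1)) := by rw [h.star_succ hp hr hrN]

theorem left_distrib (h : LaverAxioms N star) :
    ∀ p ∈ Icc 1 N, ∀ q ∈ Icc 1 N, ∀ r ∈ Icc 1 N,
      star p (star q r) = star (star p q) (star p r) := by
  refine Nat.Icc_decreasing_induction fun p hp ihp =>
    Nat.Icc_decreasing_induction fun q hq ihq r hr => ?_
  rcases hp.2.lt_or_eq with hpN | rfl
  · rcases hq.2.lt_or_eq with hqN | rfl
    · exact h.left_distrib_step hp hpN hq hqN ihp ihq r hr
    · rw [h.top_star r hr, h.star_top hp, h.top_star _ (h.star_mem hp hr)]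
  · rw [h.top_star _ (h.star_mem hq hr), h.top_star q hq, h.top_star r hr]

theorem star_star_eq_of_star_one_eq (h : LaverAxioms N star) (hp : p ∈ Icc 1 N)
    (hq : q ∈ Icc 1 N) (hs : s ∈ Icc 1 N) (hs1 : star s 1 = star p (star q 1)) :
    ∀ r ∈ Icc 1 N, star p (star q r) = star s r := by
  have hN : 1 ≤ N := hq.1.trans hq.2
  refine Nat.Icc_induction (fun _ => hs1.symm) fun r hr hrN ih => ?_
  rw [h.star_succ hq hr hrN,
    h.left_distrib p hp _ (h.star_mem hq ⟨hr, hrN.le⟩) _ (h.star_mem hq ⟨le_rfl, hN⟩),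
    ih, ← hs1, h.star_succ hs hr hrN]

theorem laverComp_mem (h : LaverAxioms N star) (hp : p ∈ Icc 1 N) (hq : q ∈ Icc 1 N) :
    laverComp N star p q ∈ Icc 1 N :=
  cyclicPred_mem (h.star_mem hp (h.star_mem hq ⟨le_rfl, hq.1.trans hq.2⟩))

theorem star_laverComp_one (h : LaverAxioms N star) (hp : p ∈ Icc 1 N) (hq : q ∈ Icc 1 N) :
    star (laverComp N star p q) 1 = star p (star q 1) := by
  rw [h.star_one (h.laverComp_mem hp hq), laverComp,
    cyclicPred_mod_add_one (h.star_mem hp (h.star_mem hq ⟨le_rfl, hq.1.trans hq.2⟩))]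

theorem star_star_eq_laverComp_star (h : LaverAxioms N star) (hp : p ∈ Icc 1 N)
    (hq : q ∈ Icc 1 N) : ∀ r ∈ Icc 1 N, star p (star q r) = star (laverComp N star p q) r :=
  h.star_star_eq_of_star_one_eq hp hq (h.laverComp_mem hp hq) (h.star_laverComp_one hp hq)

theorem eq_laverComp (h : LaverAxioms N star) (hp : p ∈ Icc 1 N) (hq : q ∈ Icc 1 N)
    (hs : s ∈ Icc 1 N) (hsr : ∀ r ∈ Icc 1 N, star p (star q r) = star s r) :
    s = laverComp N star p q := by
  have hN : 1 ≤ N := hq.1.trans hq.2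
  have hc := h.laverComp_mem hp hq
  have h₁ : star s 1 = star (laverComp N star p q) 1 := by
    rw [← hsr 1 ⟨le_rfl, hN⟩, h.star_laverComp_one hp hq]
  rw [h.star_one hs, h.star_one hc, Nat.add_right_cancel_iff] at h₁
  exact Nat.eq_of_mod_eq_of_mem_Icc hs hc h₁

theorem laverComp_add_one_mod (h : LaverAxioms N star) (hp : p ∈ Icc 1 N) (hq : q ∈ Icc 1 N) :
    (laverComp N star p q + 1) % N = star p (q % N + 1) % N := by
  rw [← h.star_one hq, ← h.star_laverComp_one hp hq, h.star_one (h.laverComp_mem hp hq),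
    Nat.mod_add_mod]

theorem laverComp_assoc (h : LaverAxioms N star) {p q r : ℕ} (hp : p ∈ Icc 1 N)
    (hq : q ∈ Icc 1 N) (hr : r ∈ Icc 1 N) :
    laverComp N star (laverComp N star p q) r = laverComp N star p (laverComp N star q r) := by
  refine (h.eq_laverComp (h.laverComp_mem hp hq) hr
    (h.laverComp_mem hp (h.laverComp_mem hq hr)) fun t ht => ?_).symm
  rw [← h.star_star_eq_laverComp_star hp hq _ (h.star_mem hr ht),
    h.star_star_eq_laverComp_star hq hr t ht,
    h.star_star_eq_laverComp_star hp (h.laverComp_mem hq hr) t ht]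

end LaverAxioms

/-- in the Laver table of order 2^n there is a composition operation
∘ₙ : for each p, q in {1,...,2^n} there is a unique s with p ⋆ₙ (q ⋆ₙ r) = s ⋆ₙ r for
all r; it satisfies (p ∘ₙ q) + 1 ≡ p ⋆ₙ (q + 1) mod 2^n (with q+1 taken mod 2^n in
{1,...,2^n}, i.e. as q % 2^n + 1) and is associative. -/
theorem laver_composition (n : ℕ) (star : ℕ → ℕ → ℕ)
    (h : LaverAxioms (2 ^ n) star) :
    ∃ comp : ℕ → ℕ → ℕ,
      (∀ p ∈ Set.Icc 1 (2 ^ n), ∀ q ∈ Set.Icc 1 (2 ^ n),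
        comp p q ∈ Set.Icc 1 (2 ^ n) ∧
        (∀ r ∈ Set.Icc 1 (2 ^ n), star p (star q r) = star (comp p q) r) ∧
        (∀ s ∈ Set.Icc 1 (2 ^ n),
          (∀ r ∈ Set.Icc 1 (2 ^ n), star p (star q r) = star s r) → s = comp p q) ∧
        (comp p q + 1) % 2 ^ n = star p (q % 2 ^ n + 1) % 2 ^ n) ∧
      (∀ p ∈ Set.Icc 1 (2 ^ n), ∀ q ∈ Set.Icc 1 (2 ^ n), ∀ r ∈ Set.Icc 1 (2 ^ n),
        comp (comp p q) r = comp p (comp q r)) :=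
  ⟨laverComp (2 ^ n) star,
    fun _ hp _ hq => ⟨h.laverComp_mem hp hq, h.star_star_eq_laverComp_star hp hq,
      fun _ hs hsr => h.eq_laverComp hp hq hs hsr, h.laverComp_add_one_mod hp hq⟩,
    fun _ hp _ hq _ hr => h.laverComp_assoc hp hq hr⟩
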